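/- Let u: (0, R) → ℝ solve u'' + (n-1)(C_k/S_k) u' + λ u = 0. Then the function w defined by w(x) = S_k(r(x))^{n/2 − 1} u(r(x)), where x = C_k(r), satisfies the Legendre equation (1 − x²) w'' − 2x w' + [ν(ν+1) − μ²/(1 − x²)] w = 0 with μ = (n−2)/2 and ν = −1/2 + √((n−1)²/4 + λ/k). -/

import Mathlib

open Real Set

noncomputable def Sk (k r : ℝ) : ℝ := if k = -1 then Real.sinh r else Real.sin r
noncomputable def Ck (k r : ℝ) : ℝ := if k = -1 then Real.cosh r else Real.cos r

/-- The substitution `w(C_k(r)) = S_k(r)^{n/2-1} u(r)` turns the radial equation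
`u'' + (n-1)(C_k/S_k)u' + λu = 0` into the Legendre equation with
`μ = (n-2)/2` and `ν = -1/2 + √((n-1)²/4 + λ/k)`. -/
theorem stmt_4 (n : ℕ) (hn : 2 ≤ n) (k : ℝ) (hk : k = -1 ∨ k = 1)
    (R lam : ℝ) (hR : 0 < R) (hlam : 0 ≤ ((n:ℝ) - 1) ^ 2 / 4 + lam / k)
    (u w : ℝ → ℝ) (hu : ContDiffOn ℝ 2 u (Ioo 0 R))
    (hw : ContDiff ℝ 2 w)
    (hSpos : ∀ r ∈ Ioo (0:ℝ) R, 0 < Sk k r)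
    (hx : ∀ r ∈ Ioo (0:ℝ) R, (Ck k r) ^ 2 ≠ 1)
    (hode : ∀ r ∈ Ioo (0:ℝ) R,
      deriv (deriv u) r + (n - 1) * (Ck k r / Sk k r) * deriv u r + lam * u r = 0)
    (hsub : ∀ r ∈ Ioo (0:ℝ) R, w (Ck k r) = Sk k r ^ ((n:ℝ) / 2 - 1) * u r)
    (μ ν : ℝ) (hμ : μ = ((n:ℝ) - 2) / 2)
    (hν : ν = -1/2 + Real.sqrt (((n:ℝ) - 1) ^ 2 / 4 + lam / k)) :
    ∀ r ∈ Ioo (0:ℝ) R,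
      (1 - (Ck k r) ^ 2) * deriv (deriv w) (Ck k r) - 2 * Ck k r * deriv w (Ck k r)
        + (ν * (ν + 1) - μ ^ 2 / (1 - (Ck k r) ^ 2)) * w (Ck k r) = 0 := by
  have hkne : k ≠ 0 := by rcases hk with h|h <;> rw [h] <;> norm_num
  have hk2 : k * k = 1 := by rcases hk with h|h <;> rw [h] <;> norm_num
  have hSd : ∀ x : ℝ, HasDerivAt (Sk k) (Ck k x) x := by
    rcases hk with h|h <;> subst h <;> intro x
    · have e1 : Sk (-1) = Real.sinh := by funext y; simp [Sk]
      have e2 : Ck (-1) = Real.cosh := by funext y; simp [Ck]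
      rw [e1, e2]; exact Real.hasDerivAt_sinh x
    · have e1 : Sk 1 = Real.sin := by funext y; norm_num [Sk]
      have e2 : Ck 1 = Real.cos := by funext y; norm_num [Ck]
      rw [e1, e2]; exact Real.hasDerivAt_sin x
  have hCd : ∀ x : ℝ, HasDerivAt (Ck k) (-k * Sk k x) x := by
    rcases hk with h|h <;> subst h <;> intro x
    · have e1 : Sk (-1) = Real.sinh := by funext y; simp [Sk]
      have e2 : Ck (-1) = Real.cosh := by funext y; simp [Ck]
      rw [e1, e2]; simpa using Real.hasDerivAt_cosh x
    · have e1 : Sk 1 = Real.sin := by funext y; norm_num [Sk]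
      have e2 : Ck 1 = Real.cos := by funext y; norm_num [Ck]
      rw [e1, e2]; simpa using Real.hasDerivAt_cos x
  have hC2 : ∀ x : ℝ, Ck k x ^ 2 + k * Sk k x ^ 2 = 1 := by
    rcases hk with h|h <;> subst h <;> intro x
    · have e1 : Sk (-1) = Real.sinh := by funext y; simp [Sk]
      have e2 : Ck (-1) = Real.cosh := by funext y; simp [Ck]
      rw [e1, e2]; have := Real.cosh_sq_sub_sinh_sq x; linarith
    · have e1 : Sk 1 = Real.sin := by funext y; norm_num [Sk]
      have e2 : Ck 1 = Real.cos := by funext y; norm_num [Ck]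
      rw [e1, e2]; have := Real.sin_sq_add_cos_sq x; linarith
  set α : ℝ := (n:ℝ)/2 - 1 with hα
  intro r hrmem
  obtain ⟨hr0, hrR⟩ := hrmem
  have hrmem : r ∈ Ioo (0:ℝ) R := ⟨hr0, hrR⟩
  have hS := hSpos r hrmem
  have hSne : Sk k r ≠ 0 := ne_of_gt hS
  have hopen : IsOpen (Ioo (0:ℝ) R) := isOpen_Ioo
  have hmemnhds : Ioo (0:ℝ) R ∈ nhds r := hopen.mem_nhds hrmem
  -- u derivatives
  have huD : ∀ t ∈ Ioo (0:ℝ) R, HasDerivAt u (deriv u t) t := fun t ht =>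
    ((hu.differentiableOn (by norm_num)).differentiableAt (hopen.mem_nhds ht)).hasDerivAt
  have hu'cd : ContDiffOn ℝ 1 (deriv u) (Ioo 0 R) := hu.deriv_of_isOpen hopen (by norm_num)
  have hu'D : HasDerivAt (deriv u) (deriv (deriv u) r) r :=
    ((hu'cd.differentiableOn (by norm_num)).differentiableAt hmemnhds).hasDerivAt
  -- w derivatives
  have hwD : Differentiable ℝ w := hw.differentiable (by norm_num)
  have hw'cd : ContDiff ℝ 1 (deriv w) := by
    have h2 : ContDiff ℝ (1+1) w := by norm_num; exact hw
    exact (contDiff_succ_iff_deriv.mp h2).2.2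
  have hw'D : Differentiable ℝ (deriv w) := hw'cd.differentiable (by norm_num)
  -- composition F = w ∘ Ck
  have hF : ∀ t : ℝ, HasDerivAt (fun s => w (Ck k s)) (deriv w (Ck k t) * (-k * Sk k t)) t :=
    fun t => ((hwD (Ck k t)).hasDerivAt).comp t (hCd t)
  have hF2 : HasDerivAt (fun t => deriv w (Ck k t) * (-k * Sk k t))
      (deriv (deriv w) (Ck k r) * (-k * Sk k r) * (-k * Sk k r)
        + deriv w (Ck k r) * (-k * Ck k r)) r := by
    have h1 : HasDerivAt (fun t => deriv w (Ck k t)) (deriv (deriv w) (Ck k r) * (-k * Sk k r)) r :=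
      ((hw'D (Ck k r)).hasDerivAt).comp r (hCd r)
    have h2 : HasDerivAt (fun t => -k * Sk k t) (-k * Ck k r) r := (hSd r).const_mul (-k)
    exact h1.mul h2
  -- G = S^α * u
  have hA : ∀ t ∈ Ioo (0:ℝ) R, HasDerivAt (fun s => Sk k s ^ α) (Ck k t * α * Sk k t ^ (α - 1)) t :=
    fun t ht => (hSd t).rpow_const (Or.inl (hSpos t ht).ne')
  have hG : ∀ t ∈ Ioo (0:ℝ) R, HasDerivAt (fun s => Sk k s ^ α * u s)
      (Ck k t * α * Sk k t ^ (α - 1) * u t + Sk k t ^ α * deriv u t) t :=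
    fun t ht => (hA t ht).mul (huD t ht)
  have hFG : (fun s => w (Ck k s)) =ᶠ[nhds r] (fun s => Sk k s ^ α * u s) :=
    Filter.eventuallyEq_of_mem hmemnhds (fun t ht => hsub t ht)
  -- first derivative identity
  have E1 := hFG.deriv_eq
  rw [(hF r).deriv, (hG r hrmem).deriv] at E1
  -- second derivative identity
  have hFG' : (deriv (fun s => w (Ck k s))) =ᶠ[nhds r] (deriv (fun s => Sk k s ^ α * u s)) := by
    filter_upwards [hmemnhds] with t ht
    exact (Filter.eventuallyEq_of_mem (hopen.mem_nhds ht) (fun y hy => hsub y hy)).deriv_eq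
  have hG1eq : (deriv (fun s => Sk k s ^ α * u s)) =ᶠ[nhds r]
      (fun t => Ck k t * α * Sk k t ^ (α-1) * u t + Sk k t ^ α * deriv u t) := by
    filter_upwards [hmemnhds] with t ht
    exact (hG t ht).deriv
  have hB : HasDerivAt (fun s => Sk k s ^ (α-1)) (Ck k r * (α-1) * Sk k r ^ (α-1-1)) r :=
    (hSd r).rpow_const (Or.inl hSne)
  have hG2 : HasDerivAt (fun t => Ck k t * α * Sk k t ^ (α-1) * u t + Sk k t ^ α * deriv u t)
      ((-k * Sk k r * α * Sk k r ^ (α - 1) + Ck k r * α * (Ck k r * (α - 1) * Sk k r ^ (α - 1 - 1))) * u r +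
        Ck k r * α * Sk k r ^ (α - 1) * deriv u r +
        (Ck k r * α * Sk k r ^ (α - 1) * deriv u r + Sk k r ^ α * deriv (deriv u) r)) r :=
    ((((hCd r).mul_const α).mul hB).mul (huD r hrmem)).add ((hA r hrmem).mul hu'D)
  have e1 : deriv (fun s => w (Ck k s)) = fun t => deriv w (Ck k t) * (-k * Sk k t) :=
    funext fun t => (hF t).deriv
  have E2 := hFG'.deriv_eq
  rw [e1, hF2.deriv, hG1eq.deriv_eq, hG2.deriv] at E2
  -- power bookkeeping
  have hp1 : Sk k r ^ (α-1) = Sk k r ^ α / Sk k r := by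
    rw [Real.rpow_sub hS, Real.rpow_one]
  have hp2 : Sk k r ^ (α-1-1) = Sk k r ^ α / Sk k r / Sk k r := by
    rw [Real.rpow_sub hS, Real.rpow_sub hS, Real.rpow_one]
  rw [hp1, hp2] at E2
  rw [hp1] at E1
  -- ODE
  have eODE := hode r hrmem
  have hn1 : (n:ℝ) - 1 = 2*α + 1 := by rw [hα]; ring
  rw [hn1] at eODE
  -- goal massage
  have h1C : 1 - Ck k r ^ 2 = k * Sk k r ^ 2 := by have := hC2 r; linarith
  have hCC : Ck k r ^ 2 = 1 - k * Sk k r ^ 2 := by have := hC2 r; linarith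
  have hμα : μ = α := by rw [hμ, hα]; ring
  have hνν : ν * (ν + 1) = α^2 + α + lam/k := by
    rw [hν, hα]; linear_combination Real.sq_sqrt hlam
  rw [hsub r hrmem, h1C, hμα, hνν]
  field_simp at E1 E2 eODE ⊢
  linear_combination E2 + Ck k r * E1 + Sk k r * Sk k r ^ α * eODE +
    α ^ 2 * Sk k r ^ α * u r * hCC
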